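/- Let R be an artinian local ring of finite type over a field k with residue field k. For finite sets σ, let D^σ = Spec(k[x_i : i ∈ σ]/m²) be the first-order neighborhood of the origin in affine σ-space. Then for n ≥ 2 the natural map D^1 ⊔_{D^0} D^{n−1} → D^n exhibits D^n as the pushout: for every scheme Y, Hom(D^n, Y) ≅ Hom(D^1, Y) ×_{Hom(D^0, Y)} Hom(D^{n−1}, Y). -/

import Mathlib

open CategoryTheory AlgebraicGeometry

/-- `D^σ`: the first-order neighbourhood of the origin in affine `σ`-space,
`Spec (k[x_i : i ∈ σ]/m²)`, realized as the spectrum of the trivial square-zero extension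
`k ⊕ (σ → k)`. -/
noncomputable abbrev Dsigma (k : Type) [Field k] (n : ℕ) : Scheme :=
  Spec (CommRingCat.of (TrivSqZeroExt k (Fin n → k)))

/-!
`D^n` is the spectrum of the local ring `k ⊕ kⁿ`, which is the fibre product of rings
`(k ⊕ k) ×_k (k ⊕ kⁿ⁻¹)` because `kⁿ = k × kⁿ⁻¹`.
A morphism from the spectrum of a local ring `R` to a scheme `Y` amounts to a point `y` of `Y`
together with a local homomorphism `𝒪_{Y,y} → R`. Two morphisms out of `D^1` and `D^{n-1}`
that agree on `D^0` send the closed points to the same `y`, and their local homomorphisms out of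
`𝒪_{Y,y}` agree after composing to `k`; the universal property of the fibre product of rings
glues them, uniquely, into a homomorphism `𝒪_{Y,y} → k ⊕ kⁿ`.
-/

open Limits IsLocalRing

universe u

instance CommRingCat.isLocalHom_ofHom {R S : Type u} [CommRing R] [CommRing S] (f : R →+* S)
    [IsLocalHom f] : IsLocalHom (CommRingCat.ofHom f).hom :=
  ‹IsLocalHom f›

namespace TrivSqZeroExt

variable {R : Type u} [CommRing R]

instance isLocalRing [IsLocalRing R] (M : Type u) [AddCommGroup M] [Module R M]
    [Module Rᵐᵒᵖ M] [IsCentralScalar R M] : IsLocalRing (TrivSqZeroExt R M) :=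
  IsLocalRing.of_isUnit_or_isUnit_one_sub_self fun a => by
    simpa only [isUnit_iff_isUnit_fst, fst_sub, fst_one] using
      IsLocalRing.isUnit_or_isUnit_one_sub_self a.fst

variable {M M₁ M₂ : Type u} [AddCommGroup M] [Module R M] [Module Rᵐᵒᵖ M] [IsCentralScalar R M]
  [AddCommGroup M₁] [Module R M₁] [Module Rᵐᵒᵖ M₁] [IsCentralScalar R M₁]
  [AddCommGroup M₂] [Module R M₂] [Module Rᵐᵒᵖ M₂] [IsCentralScalar R M₂]

instance isLocalHom_fstHom : IsLocalHom (fstHom R R M).toRingHom :=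
  ⟨fun _ ha => isUnit_iff_isUnit_fst.mpr ha⟩

instance isLocalHom_map (f : M →ₗ[R] M₁) : IsLocalHom (map f).toRingHom :=
  ⟨fun a ha => by
    rw [isUnit_iff_isUnit_fst] at ha ⊢
    simpa using ha⟩

open CommRingCat in
theorem isPullback_map_fstHom {f₁ : M →ₗ[R] M₁} {f₂ : M →ₗ[R] M₂}
    (hf : Function.Bijective (f₁.prod f₂)) :
    IsPullback (ofHom (map f₁).toRingHom) (ofHom (map f₂).toRingHom)
      (ofHom (fstHom R R M₁).toRingHom) (ofHom (fstHom R R M₂).toRingHom) := by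
  have w : ofHom (map f₁).toRingHom ≫ ofHom (fstHom R R M₁).toRingHom =
      ofHom (map f₂).toRingHom ≫ ofHom (fstHom R R M₂).toRingHom := by
    ext; simp
  refine (IsPullback.map_iff (forget CommRingCat) w).mp
    ((Types.isPullback_iff _ _ _ _).mpr ⟨congr((forget CommRingCat).map $w), ?_, ?_⟩)
  · rintro x y ⟨h₁, h₂⟩
    have h₁' : map f₁ x = map f₁ y := h₁
    have h₂' : map f₂ x = map f₂ y := h₂
    ext
    · simpa using congr(fst $h₁')
    · refine hf.injective (Prod.ext ?_ ?_)
      · simpa using congr(snd $h₁')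
      · simpa using congr(snd $h₂')
  · intro x₁ x₂ h
    have h' : x₁.fst = x₂.fst := h
    obtain ⟨v, hv⟩ := hf.surjective (x₁.snd, x₂.snd)
    refine ⟨inl x₁.fst + inr v, ?_, ?_⟩
    · change map f₁ (inl x₁.fst + inr v) = x₁
      ext
      · simp
      · simpa using congr(Prod.fst $hv)
    · change map f₂ (inl x₁.fst + inr v) = x₂
      ext
      · simpa using h'
      · simpa using congr(Prod.snd $hv)

end TrivSqZeroExt

namespace AlgebraicGeometry

variable {X : Scheme.{u}} {R : CommRingCat.{u}} [IsLocalRing R]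

lemma exists_SpecMap_comp_fromSpecStalk_eq (g : Spec R ⟶ X) :
    ∃ (x : X) (φ : X.presheaf.stalk x ⟶ R), IsLocalHom φ.hom ∧
      Spec.map φ ≫ X.fromSpecStalk x = g :=
  ⟨_, _, inferInstance, Scheme.Spec_stalkClosedPointTo_fromSpecStalk g⟩

lemma SpecMap_comp_fromSpecStalk_closedPoint {x : X} (φ : X.presheaf.stalk x ⟶ R)
    [IsLocalHom φ.hom] : (Spec.map φ ≫ X.fromSpecStalk x) (closedPoint R) = x := by
  change X.fromSpecStalk x (Spec.map φ (closedPoint R)) = x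
  rw [Spec_closedPoint, Scheme.fromSpecStalk_closedPoint]

lemma SpecMap_comp_fromSpecStalk_injective {x : X} {φ ψ : X.presheaf.stalk x ⟶ R}
    [IsLocalHom φ.hom] [IsLocalHom ψ.hom]
    (h : Spec.map φ ≫ X.fromSpecStalk x = Spec.map ψ ≫ X.fromSpecStalk x) : φ = ψ := by
  obtain ⟨_, hφψ⟩ := SpecToEquivOfLocalRing_eq_iff.mp <|
    (SpecToEquivOfLocalRing X R).symm.injective (a₁ := ⟨x, φ, ‹_›⟩) (a₂ := ⟨x, ψ, ‹_›⟩) h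
  simpa using hφψ

variable {A B₁ B₂ K : CommRingCat.{u}} {p₁ : A ⟶ B₁} {p₂ : A ⟶ B₂} {q₁ : B₁ ⟶ K} {q₂ : B₂ ⟶ K}

lemma SpecMap_hom_ext_of_isPullback [IsLocalRing A] [IsLocalRing B₁] [IsLocalRing B₂]
    [IsLocalHom p₁.hom] [IsLocalHom p₂.hom] (hA : IsPullback p₁ p₂ q₁ q₂) {g g' : Spec A ⟶ X}
    (h₁ : Spec.map p₁ ≫ g = Spec.map p₁ ≫ g') (h₂ : Spec.map p₂ ≫ g = Spec.map p₂ ≫ g') :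
    g = g' := by
  obtain ⟨x, χ, _, rfl⟩ := exists_SpecMap_comp_fromSpecStalk_eq g
  obtain ⟨x', χ', _, rfl⟩ := exists_SpecMap_comp_fromSpecStalk_eq g'
  obtain rfl : x = x' := by
    simpa only [← Scheme.Hom.comp_apply, ← Spec.map_comp_assoc,
      SpecMap_comp_fromSpecStalk_closedPoint] using congr($h₁ (closedPoint B₁))
  obtain rfl : χ = χ' := by
    refine hA.hom_ext ?_ ?_ <;> apply SpecMap_comp_fromSpecStalk_injective
    · simpa only [Spec.map_comp_assoc] using h₁
    · simpa only [Spec.map_comp_assoc] using h₂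
  rfl

lemma exists_SpecMap_desc_of_isPullback [IsLocalRing B₁] [IsLocalRing B₂] [IsLocalRing K]
    [IsLocalHom q₁.hom] [IsLocalHom q₂.hom] (hA : IsPullback p₁ p₂ q₁ q₂)
    (g₁ : Spec B₁ ⟶ X) (g₂ : Spec B₂ ⟶ X) (h : Spec.map q₁ ≫ g₁ = Spec.map q₂ ≫ g₂) :
    ∃ g : Spec A ⟶ X, Spec.map p₁ ≫ g = g₁ ∧ Spec.map p₂ ≫ g = g₂ := by
  obtain ⟨x, φ₁, _, rfl⟩ := exists_SpecMap_comp_fromSpecStalk_eq g₁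
  obtain ⟨x', φ₂, _, rfl⟩ := exists_SpecMap_comp_fromSpecStalk_eq g₂
  obtain rfl : x = x' := by
    simpa only [← Scheme.Hom.comp_apply, ← Spec.map_comp_assoc,
      SpecMap_comp_fromSpecStalk_closedPoint] using congr($h (closedPoint K))
  have hφ : φ₁ ≫ q₁ = φ₂ ≫ q₂ :=
    SpecMap_comp_fromSpecStalk_injective (by simpa only [Spec.map_comp_assoc] using h)
  refine ⟨Spec.map (hA.lift φ₁ φ₂ hφ) ≫ X.fromSpecStalk x, ?_, ?_⟩
  · rw [← Spec.map_comp_assoc, hA.lift_fst]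
  · rw [← Spec.map_comp_assoc, hA.lift_snd]

theorem isPushout_SpecMap_of_isPullback [IsLocalRing A] [IsLocalRing B₁] [IsLocalRing B₂]
    [IsLocalRing K] [IsLocalHom p₁.hom] [IsLocalHom p₂.hom] [IsLocalHom q₁.hom]
    [IsLocalHom q₂.hom] (hA : IsPullback p₁ p₂ q₁ q₂) :
    IsPushout (Spec.map q₁) (Spec.map q₂) (Spec.map p₁) (Spec.map p₂) := by
  refine IsPushout.of_isColimit' ⟨by simp only [← Spec.map_comp, hA.w]⟩ <|
    PushoutCocone.isColimitAux' _ fun s => ?_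
  choose g hg₁ hg₂ using exists_SpecMap_desc_of_isPullback hA s.inl s.inr s.condition
  exact ⟨g, hg₁, hg₂, fun h₁ h₂ =>
    SpecMap_hom_ext_of_isPullback hA (h₁.trans hg₁.symm) (h₂.trans hg₂.symm)⟩

end AlgebraicGeometry

theorem stmt_11_general (k : Type) [Field k] (m : ℕ) (Y : Scheme)
    (g₁ : Spec (CommRingCat.of (TrivSqZeroExt k k)) ⟶ Y)
    (g₂ : Dsigma k m ⟶ Y)
    (hcompat :
      Spec.map (CommRingCat.ofHom (TrivSqZeroExt.fstHom k k k).toRingHom) ≫ g₁ =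
      Spec.map (CommRingCat.ofHom (TrivSqZeroExt.fstHom k k (Fin m → k)).toRingHom) ≫ g₂) :
    ∃! g : Dsigma k (m + 1) ⟶ Y,
      Spec.map (CommRingCat.ofHom
          (TrivSqZeroExt.map (R' := k) (LinearMap.proj (0 : Fin (m + 1)))).toRingHom) ≫ g = g₁ ∧
      Spec.map (CommRingCat.ofHom
          (TrivSqZeroExt.map (R' := k) (LinearMap.funLeft k k Fin.succ)).toRingHom) ≫ g = g₂ := by
  have hsplit : Function.Bijective
      ((LinearMap.proj (R := k) (φ := fun _ : Fin (m + 1) => k) 0).prod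
        (LinearMap.funLeft k k Fin.succ)) :=
    (Fin.consLinearEquiv k fun _ => k).symm.bijective
  have hD := isPushout_SpecMap_of_isPullback (TrivSqZeroExt.isPullback_map_fstHom hsplit)
  obtain ⟨g, hg₁, hg₂⟩ := hD.exists_desc g₁ g₂ hcompat
  exact ⟨g, ⟨hg₁, hg₂⟩, fun g' ⟨hg₁', hg₂'⟩ =>
    hD.hom_ext (hg₁'.trans hg₁.symm) (hg₂'.trans hg₂.symm)⟩

/-- for `n ≥ 2` (written `n = m + 1` with `m ≥ 1`), the square-zero
neighbourhood `D^n` is the pushout `D^1 ⊔_{D^0} D^{n-1}` in the category of schemes: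
for every scheme `Y`, `Hom(D^n, Y) ≅ Hom(D^1, Y) ×_{Hom(D^0, Y)} Hom(D^{n-1}, Y)`.
The closed immersions `D^1 → D^n` and `D^{n-1} → D^n` correspond to the projections
`k[x₁,…,x_n]/m² → k[x]/m²` (first coordinate) and `→ k[x₂,…,x_n]/m²` (remaining
coordinates), and `D^0 = Spec k` maps in via the augmentations. -/
theorem stmt_11 (k : Type) [Field k] (m : ℕ) (hm : 1 ≤ m) (Y : Scheme)
    (g₁ : Spec (CommRingCat.of (TrivSqZeroExt k k)) ⟶ Y)
    (g₂ : Dsigma k m ⟶ Y)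
    (hcompat :
      Spec.map (CommRingCat.ofHom (TrivSqZeroExt.fstHom k k k).toRingHom) ≫ g₁ =
      Spec.map (CommRingCat.ofHom (TrivSqZeroExt.fstHom k k (Fin m → k)).toRingHom) ≫ g₂) :
    ∃! g : Dsigma k (m + 1) ⟶ Y,
      Spec.map (CommRingCat.ofHom
          (TrivSqZeroExt.map (R' := k) (LinearMap.proj (0 : Fin (m + 1)))).toRingHom) ≫ g = g₁ ∧
      Spec.map (CommRingCat.ofHom
          (TrivSqZeroExt.map (R' := k) (LinearMap.funLeft k k Fin.succ)).toRingHom) ≫ g = g₂ :=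
  stmt_11_general k m Y g₁ g₂ hcompat
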